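/- arXiv:1906.11743 — 4 statements merged into one kernel-verified Lean document; each statement's English description precedes it below -/
import Mathlib

section
/- Let s and t be integers with 2 ≤ s ≤ t−1, and let G be a finite simple graph. Suppose that γ^{s/t}(G) is not an integer and that γ^{s/t}(G) ≤ ⌊γ^{s/t}(G)⌋ + (s−1)/t. Then γ^{1/t}(G) < ⌊γ^{s/t}(G)⌋. -/
/-!
Take a minimum `s/t`-SDF `f` with `a` vertices of value `1` and `b` of value `s/t`, so
`γ^{s/t}(G) = a + b s/t`. Lowering every value `s/t` to `1/t` gives a `1/t`-SDF of weight
`a + b/t`, because only vertices of value `1` dominate. The hypotheses on the fractional part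
force `b ≥ 2` (`b = 0` makes `γ^{s/t}` an integer, `b = 1` makes its fractional part `s/t`), and
then `a + b/t < a + b s/t - (s-1)/t ≤ ⌊γ^{s/t}(G)⌋` since `(b-1)(s-1) > 0`.
-/

open Filter

/-- A `c`-self dominating function of `G` with values in `{0, 1, c}`. -/
def SimpleGraph.IsSDF {V : Type*} (G : SimpleGraph V) (c : ℝ) (f : V → ℝ) : Prop :=
  (∀ u, f u = 0 ∨ f u = 1 ∨ f u = c) ∧
  (∀ u, c ≤ f u ∨ ∃ v, G.Adj u v ∧ 1 ≤ f v)

/-- The `c`-self domination number of `G`. -/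
noncomputable def SimpleGraph.selfDom {V : Type*} [Fintype V] (G : SimpleGraph V) (c : ℝ) : ℝ :=
  sInf {w : ℝ | ∃ f : V → ℝ, G.IsSDF c f ∧ w = ∑ u, f u}

open Finset

theorem sum_ite_eq_card_add_card_mul {V : Type*} [Fintype V] {f : V → ℝ} {c : ℝ}
    (hf : ∀ u, f u = 0 ∨ f u = 1 ∨ f u = c) (hc : c ≠ 1) (d : ℝ) :
    ∑ u, (if f u = c then d else f u) = #{u | f u = 1} + #{u | f u = c} * d := by
  have hsplit : ∀ u, (if f u = c then d else f u) =
      (if f u = 1 then 1 else 0) + (if f u = c then d else 0) := by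
    intro u
    rcases hf u with h | h | h <;> by_cases hu : f u = c <;> simp_all
  simp only [hsplit, sum_add_distrib, sum_boole, ← sum_filter, sum_const, nsmul_eq_mul]

namespace SimpleGraph

variable {V : Type*} {G : SimpleGraph V} {c d : ℝ} {f : V → ℝ}

theorem IsSDF.replace (hf : G.IsSDF c f) (hc0 : 0 ≤ c) (hc1 : c < 1) (hd : d ≤ 1) :
    G.IsSDF d (fun u => if f u = c then d else f u) := by
  have h1c : (1 : ℝ) ≠ c := hc1.ne'
  refine ⟨fun u => ?_, fun u => ?_⟩ <;> by_cases hu : f u = c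
  · simp [hu]
  · simp only [hu, if_false]
    rcases hf.1 u with h | h | h
    exacts [Or.inl h, Or.inr (Or.inl h), absurd h hu]
  · simp [hu]
  rcases hf.2 u with h | ⟨v, hadj, hv⟩
  · left
    rcases hf.1 u with h' | h' | h'
    · exact absurd (h'.trans (le_antisymm (h' ▸ h) hc0).symm) hu
    · simpa [hu, h', h1c] using hd
    · exact absurd h' hu
  · -- a vertex of value `c < 1` cannot dominate, so `v` has value `1` and keeps it
    have hv1 : f v = 1 := by
      rcases hf.1 v with h' | h' | h' <;> rw [h'] at hv ⊢ <;> linarith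
    exact Or.inr ⟨v, hadj, by simp [hv1, h1c]⟩

section Fintype

variable (G) [Fintype V]

theorem finite_setOf_isSDF_weight (c : ℝ) :
    {w : ℝ | ∃ f : V → ℝ, G.IsSDF c f ∧ w = ∑ u, f u}.Finite := by
  refine ((Set.Finite.pi fun _ => ((Set.finite_singleton c).insert 1).insert 0).image
    (fun f : V → ℝ => ∑ u, f u)).subset ?_
  rintro w ⟨f, hf, rfl⟩
  exact ⟨f, fun u _ => by rcases hf.1 u with h | h | h <;> simp [h], rfl⟩

theorem selfDom_le_sum (hf : G.IsSDF c f) : G.selfDom c ≤ ∑ u, f u :=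
  csInf_le (G.finite_setOf_isSDF_weight c).bddBelow ⟨f, hf, rfl⟩

theorem exists_isSDF_sum_eq_selfDom (hc : c ≤ 1) :
    ∃ f, G.IsSDF c f ∧ ∑ u, f u = G.selfDom c := by
  have hne : {w : ℝ | ∃ f : V → ℝ, G.IsSDF c f ∧ w = ∑ u, f u}.Nonempty :=
    ⟨_, fun _ => 1, ⟨fun _ => Or.inr (Or.inl rfl), fun _ => Or.inl hc⟩, rfl⟩
  obtain ⟨f, hf, hsum⟩ := hne.csInf_mem (G.finite_setOf_isSDF_weight c)
  exact ⟨f, hf, hsum.symm⟩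

theorem exists_selfDom_eq_and_selfDom_le (hc0 : 0 ≤ c) (hc1 : c < 1) (hd : d ≤ 1) :
    ∃ a b : ℕ, G.selfDom c = a + b * c ∧ G.selfDom d ≤ a + b * d := by
  obtain ⟨f, hf, hsum⟩ := G.exists_isSDF_sum_eq_selfDom hc1.le
  refine ⟨#{u | f u = 1}, #{u | f u = c}, ?_, ?_⟩
  · rw [← hsum, ← sum_ite_eq_card_add_card_mul hf.1 hc1.ne]
    exact sum_congr rfl fun u _ => by split_ifs with h <;> simp [h]
  · rw [← sum_ite_eq_card_add_card_mul hf.1 hc1.ne]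
    exact G.selfDom_le_sum (hf.replace hc0 hc1 hd)

end Fintype

end SimpleGraph

theorem add_mul_one_div_lt_floor (a b : ℕ) {s t : ℕ} (hs : 2 ≤ s) (hst : s < t)
    (hint : ¬ ∃ z : ℤ, (a + b * (s / t) : ℝ) = z)
    (hfract : (a + b * (s / t) : ℝ) ≤ ⌊(a + b * (s / t) : ℝ)⌋ + (s - 1) / t) :
    (a + b * (1 / t) : ℝ) < ⌊(a + b * (s / t) : ℝ)⌋ := by
  have ht : (0 : ℝ) < t := by exact_mod_cast (show 0 < t by omega)
  have hsR : (2 : ℝ) ≤ s := by exact_mod_cast hs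
  have hstR : (s : ℝ) < t := by exact_mod_cast hst
  obtain rfl | rfl | hb := (show b = 0 ∨ b = 1 ∨ 2 ≤ b by omega)
  · exact absurd ⟨a, by simp⟩ hint
  · simp only [Nat.cast_one, one_mul] at hfract ⊢
    have hfloor : ⌊(a + s / t : ℝ)⌋ = a := by
      rw [Int.floor_natCast_add, Int.floor_eq_zero_iff.mpr ⟨by positivity,
        (div_lt_one ht).mpr hstR⟩, add_zero]
    rw [hfloor] at hfract
    have hle : (s : ℝ) / t ≤ (s - 1) / t := by push_cast at hfract; linarith
    rw [div_le_div_iff_of_pos_right ht] at hle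
    linarith
  · have hbR : (2 : ℝ) ≤ b := by exact_mod_cast hb
    have hgap : (b * (1 / t) : ℝ) + (s - 1) / t < b * (s / t) := by
      rw [mul_one_div, ← add_div, mul_div_assoc', div_lt_div_iff_of_pos_right ht]
      nlinarith
    linarith

theorem stmt_7 {V : Type*} [Fintype V] (G : SimpleGraph V) (s t : ℕ)
    (hs : 2 ≤ s) (hst : s ≤ t - 1)
    (h1 : ¬ ∃ z : ℤ, G.selfDom ((s : ℝ) / t) = (z : ℝ))
    (h2 : G.selfDom ((s : ℝ) / t) ≤
      (⌊G.selfDom ((s : ℝ) / t)⌋ : ℝ) + ((s : ℝ) - 1) / t) :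
    G.selfDom ((1 : ℝ) / t) < (⌊G.selfDom ((s : ℝ) / t)⌋ : ℝ) := by
  have hst' : s < t := by omega
  have ht : (0 : ℝ) < t := by exact_mod_cast (show 0 < t by omega)
  obtain ⟨a, b, hc, hd⟩ := G.exists_selfDom_eq_and_selfDom_le (c := s / t) (d := 1 / t)
    (by positivity) ((div_lt_one ht).mpr (by exact_mod_cast hst'))
    ((div_le_one ht).mpr (by exact_mod_cast (show 1 ≤ t by omega)))
  rw [hc] at h1 h2 ⊢
  exact hd.trans_lt (add_mul_one_div_lt_floor a b hs hst' h1 h2)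
end

section
/- Let t ≥ 2 be an integer, let p ∈ (0,1), let n be a positive integer, and let m₁, m₂ be nonnegative integers with m₁ + m₂ ≤ n. For a graph G on vertex set Fin n, let X_{m₁,m₂}(G) be the number of (1/t)-self dominating functions f : Fin n → {0, 1, 1/t} of G with |{u : f(u) = 1}| = m₁ and |{u : f(u) = 1/t}| = m₂. Then the expectation of X_{m₁,m₂} with respect to μ_{n,p} equals n!/((n−m₁−m₂)!·m₁!·m₂!) · (1 − (1−p)^{m₁})^{n−m₁−m₂}. -/
/-! By linearity of expectation, it suffices to count and weigh the pairs of disjoint sets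
`(S₁, S₂)` with `|S₁| = m₁`, `|S₂| = m₂`: a `1/t`-SDF is the function equal to `1` on `S₁`, `1/t` on
`S₂` and `0` elsewhere, and it is self-dominating exactly when every vertex outside `S₁ ∪ S₂` has a
neighbour in `S₁`. There are `n! / ((n - m₁ - m₂)! m₁! m₂!)` such pairs. For a fixed pair, the
events that `u ∉ S₁ ∪ S₂` has a neighbour in `S₁` concern pairwise disjoint sets of `m₁`
potential edges, so they are independent, each of probability `1 - (1 - p) ^ m₁`. -/

open Filter

/-- The expectation of a random variable `X` under the Erdős–Rényi measure `μ_{n,p}`. -/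
noncomputable def erExp (n : ℕ) (p : ℝ) (X : SimpleGraph (Fin n) → ℝ) : ℝ :=
  ∑ G : SimpleGraph (Fin n),
    (p ^ (Nat.card G.edgeSet) * (1 - p) ^ (n.choose 2 - Nat.card G.edgeSet)) * X G


open Finset

section Bernoulli

variable {α ι κ : Type*} [Fintype α] [Fintype ι] [Fintype κ]

def bernoulliWeight (p : ℝ) (g : α → Bool) : ℝ :=
  ∏ a, if g a then p else 1 - p

theorem bernoulliWeight_eq_pow (p : ℝ) (g : α → Bool) :
    bernoulliWeight p g = p ^ #{a | g a} * (1 - p) ^ (Fintype.card α - #{a | g a}) := by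
  rw [bernoulliWeight, prod_ite, prod_const, prod_const, ← card_univ,
    ← card_filter_add_card_filter_not (s := univ) (fun a => g a = true), Nat.add_sub_cancel_left]

theorem sum_bernoulliWeight [DecidableEq α] (p : ℝ) :
    ∑ g : α → Bool, bernoulliWeight p g = 1 := by
  simp only [bernoulliWeight]
  rw [← Fintype.prod_sum fun _ (b : Bool) => if b then p else 1 - p]
  simp

theorem sum_bernoulliWeight_mul_exists [DecidableEq α] (p : ℝ) :
    ∑ g : α → Bool, bernoulliWeight p g * (if ∃ a, g a then 1 else 0) =
      1 - (1 - p) ^ Fintype.card α := by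
  have hexists : ∀ g : α → Bool,
      (if ∃ a, g a then (1 : ℝ) else 0) = 1 - if g = fun _ => false then 1 else 0 := by
    intro g
    by_cases hg : g = fun _ => false
    · simp [hg]
    · obtain ⟨a, ha⟩ := Function.ne_iff.mp hg
      simp only [if_neg hg, sub_zero, ite_eq_left_iff, not_exists, zero_ne_one, imp_false,
        not_forall, Bool.not_eq_true]
      exact ⟨a, by simpa using ha⟩
  simp only [hexists, mul_sub, mul_one, mul_ite, mul_zero, sum_sub_distrib, sum_bernoulliWeight,
    Fintype.sum_ite_eq']
  simp [bernoulliWeight]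

/-- The coins indexed by a subfamily are again independent `p`-biased coins. -/
theorem sum_bernoulliWeight_mul_comp_embedding [DecidableEq α] [DecidableEq ι] (p : ℝ)
    (f : ι ↪ α) (F : (ι → Bool) → ℝ) :
    ∑ g : α → Bool, bernoulliWeight p g * F (g ∘ f) =
      ∑ h : ι → Bool, bernoulliWeight p h * F h := by
  classical
  let e : ι ⊕ ↥(Set.range f)ᶜ ≃ α :=
    ((Equiv.ofInjective f f.injective).sumCongr (Equiv.refl _)).trans (Equiv.Set.sumCompl _)
  have hw : ∀ g : α → Bool, bernoulliWeight p g =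
      bernoulliWeight p (fun i => g (e (.inl i))) * bernoulliWeight p (fun r => g (e (.inr r))) :=
    fun g => by rw [bernoulliWeight, ← e.prod_comp, Fintype.prod_sum_type]; rfl
  rw [Fintype.sum_equiv ((e.arrowCongr (Equiv.refl Bool)).symm.trans
      (Equiv.sumArrowEquivProdArrow _ _ Bool)) _
      (fun x => bernoulliWeight p x.1 * bernoulliWeight p x.2 * F x.1) (fun g => by rw [hw]; rfl),
    Fintype.sum_prod_type]
  simp [mul_right_comm _ _ (F _), ← mul_sum, sum_bernoulliWeight]

/-- Events depending on disjoint blocks `{i} × κ` of coins are independent. -/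
theorem sum_bernoulliWeight_mul_prod_curry [DecidableEq ι] [DecidableEq κ] (p : ℝ)
    (F : ι → (κ → Bool) → ℝ) :
    ∑ h : ι × κ → Bool, bernoulliWeight p h * ∏ i, F i (fun k => h (i, k)) =
      ∏ i, ∑ k : κ → Bool, bernoulliWeight p k * F i k := by
  rw [Fintype.prod_sum, ← (Equiv.curry ι κ Bool).symm.sum_comp]
  refine sum_congr rfl fun h _ => ?_
  rw [bernoulliWeight, Fintype.prod_prod_type, ← prod_mul_distrib]
  rfl

end Bernoulli

namespace SimpleGraph

variable {V : Type*}

open Classical in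
noncomputable def edgeIndicator (G : SimpleGraph V) (e : {e : Sym2 V // ¬e.IsDiag}) : Bool :=
  decide (e.1 ∈ G.edgeSet)

theorem edgeIndicator_eq_true_iff {G : SimpleGraph V} {e : {e : Sym2 V // ¬e.IsDiag}} :
    G.edgeIndicator e = true ↔ e.1 ∈ G.edgeSet := by
  simp [edgeIndicator]

theorem edgeIndicator_bijective :
    Function.Bijective (edgeIndicator : SimpleGraph V → {e : Sym2 V // ¬e.IsDiag} → Bool) := by
  refine ⟨fun G H hGH => edgeSet_inj.mp (Set.ext fun e => ?_), fun g => ?_⟩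
  · by_cases he : e.IsDiag
    · simp [G.not_mem_edgeSet_of_isDiag he, H.not_mem_edgeSet_of_isDiag he]
    · simp only [← edgeIndicator_eq_true_iff (e := ⟨e, he⟩), hGH]
  · refine ⟨fromEdgeSet {e | ∃ h, g ⟨e, h⟩}, funext fun e => ?_⟩
    rw [Bool.eq_iff_iff, edgeIndicator_eq_true_iff, edgeSet_fromEdgeSet]
    simp [e.2]

theorem nat_card_edgeSet_eq_card_edgeIndicator [Fintype V] [DecidableEq V] (G : SimpleGraph V) :
    Nat.card G.edgeSet = #{e | G.edgeIndicator e} := by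
  classical
  rw [Nat.card_congr (Equiv.subtypeSubtypeEquivSubtype G.not_isDiag_of_mem_edgeSet).symm,
    Nat.card_eq_fintype_card, Fintype.card_subtype]
  simp [edgeIndicator_eq_true_iff]

end SimpleGraph

open SimpleGraph

theorem erExp_eq_sum_bernoulliWeight (n : ℕ) (p : ℝ) (X : SimpleGraph (Fin n) → ℝ) :
    erExp n p X = ∑ G, bernoulliWeight p G.edgeIndicator * X G := by
  refine sum_congr rfl fun G _ => ?_
  rw [bernoulliWeight_eq_pow, Sym2.card_subtype_not_diag, Fintype.card_fin,
    G.nat_card_edgeSet_eq_card_edgeIndicator]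

theorem erExp_sum {ι : Type*} (n : ℕ) (p : ℝ) (s : Finset ι)
    (X : ι → SimpleGraph (Fin n) → ℝ) :
    erExp n p (fun G => ∑ i ∈ s, X i G) = ∑ i ∈ s, erExp n p (X i) := by
  simp only [erExp, mul_sum]
  exact sum_comm

open Classical in
theorem erExp_forall_exists_adj {n : ℕ} (p : ℝ) {S T : Finset (Fin n)} (hST : S ⊆ T) :
    erExp n p (fun G => if ∀ u ∉ T, ∃ v ∈ S, G.Adj u v then 1 else 0) =
      (1 - (1 - p) ^ #S) ^ (n - #T) := by
  have hne : ∀ u ∉ T, ∀ v ∈ S, u ≠ v := fun u hu v hv huv => hu (huv ▸ hST hv)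
  let edge : {u // u ∉ T} × {v // v ∈ S} ↪ {e : Sym2 (Fin n) // ¬e.IsDiag} :=
    ⟨fun x => ⟨s(x.1, x.2), Sym2.mk_isDiag_iff.not.mpr (hne _ x.1.2 _ x.2.2)⟩, by
      rintro ⟨u, v⟩ ⟨u', v'⟩ h
      rcases Sym2.eq_iff.mp (congrArg Subtype.val h) with ⟨hu, hv⟩ | ⟨hu, -⟩
      · exact Prod.ext (Subtype.ext hu) (Subtype.ext hv)
      · exact absurd hu (hne _ u.2 _ v'.2)⟩
  have hedge : ∀ x, (edge x).1 = s(x.1.1, x.2.1) := fun _ => rfl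
  let hit : ({v // v ∈ S} → Bool) → ℝ := fun k => if ∃ v, k v then 1 else 0
  have hind : ∀ G : SimpleGraph (Fin n),
      (if ∀ u ∉ T, ∃ v ∈ S, G.Adj u v then (1 : ℝ) else 0) =
        ∏ u, hit (fun v => (G.edgeIndicator ∘ edge) (u, v)) := by
    intro G
    simp [hit, prod_boole, edgeIndicator_eq_true_iff, hedge]
  rw [erExp_eq_sum_bernoulliWeight, sum_congr rfl fun G _ => by rw [hind],
    edgeIndicator_bijective.sum_comp
      (fun g => bernoulliWeight p g * ∏ u, hit (fun v => (g ∘ edge) (u, v))),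
    sum_bernoulliWeight_mul_comp_embedding p edge (fun h => ∏ u, hit (fun v => h (u, v))),
    sum_bernoulliWeight_mul_prod_curry]
  simp only [hit, sum_bernoulliWeight_mul_exists, prod_const, Fintype.card_coe]
  simp

section LevelSets

variable {V : Type*} [DecidableEq V] {c : ℝ}

def levelFun (c : ℝ) (x : Finset V × Finset V) (u : V) : ℝ :=
  if u ∈ x.1 then 1 else if u ∈ x.2 then c else 0

theorem levelFun_eq_one_iff (hc1 : c ≠ 1) {x : Finset V × Finset V} {u : V} :
    levelFun c x u = 1 ↔ u ∈ x.1 := by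
  unfold levelFun
  split_ifs <;> simp_all

theorem levelFun_eq_self_iff (hc0 : c ≠ 0) (hc1 : c ≠ 1) {x : Finset V × Finset V}
    (hx : Disjoint x.1 x.2) {u : V} : levelFun c x u = c ↔ u ∈ x.2 := by
  unfold levelFun
  split_ifs with h1
  · simp [Ne.symm hc1, Finset.disjoint_left.mp hx h1]
  all_goals simp_all [Ne.symm hc0]

theorem levelFun_filter [Fintype V] {f : V → ℝ} (hf : ∀ u, f u = 0 ∨ f u = 1 ∨ f u = c) :
    levelFun c (({u | f u = 1} : Finset V), ({u | f u = c} : Finset V)) = f := by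
  funext u
  unfold levelFun
  rcases hf u with h | h | h <;> split_ifs <;> simp_all

theorem isSDF_levelFun_iff (hc0 : 0 < c) (hc1 : c < 1) (G : SimpleGraph V)
    (x : Finset V × Finset V) :
    G.IsSDF c (levelFun c x) ↔ ∀ u ∉ x.1 ∪ x.2, ∃ v ∈ x.1, G.Adj u v := by
  have hge : ∀ u, 1 ≤ levelFun c x u ↔ u ∈ x.1 := fun u => by
    unfold levelFun; split_ifs <;> simp_all [hc1.not_ge]
  have hsmall : ∀ u, c ≤ levelFun c x u ↔ u ∈ x.1 ∪ x.2 := fun u => by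
    unfold levelFun; split_ifs <;> simp_all [hc1.le, hc0.not_ge]
  have hval : ∀ u, levelFun c x u = 0 ∨ levelFun c x u = 1 ∨ levelFun c x u = c := fun u => by
    unfold levelFun; split_ifs <;> simp
  simp only [SimpleGraph.IsSDF, hval, implies_true, true_and, hsmall, hge]
  refine forall_congr' fun u => ?_
  by_cases hu : u ∈ x.1 ∪ x.2 <;> simp [hu, and_comm]

end LevelSets

section DisjointPairs

variable (V : Type*) [Fintype V] [DecidableEq V]

def disjointPairs (m₁ m₂ : ℕ) : Finset (Finset V × Finset V) :=
  {x ∈ univ.powersetCard m₁ ×ˢ univ.powersetCard m₂ | Disjoint x.1 x.2}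

theorem card_disjointPairs (m₁ m₂ : ℕ) :
    #(disjointPairs V m₁ m₂) =
      (Fintype.card V).choose m₁ * (Fintype.card V - m₁).choose m₂ := by
  have hfiber : ∀ S₁ ∈ (univ : Finset V).powersetCard m₁,
      #{S₂ ∈ univ.powersetCard m₂ | Disjoint S₁ S₂} = (Fintype.card V - m₁).choose m₂ := by
    intro S₁ hS₁
    have hS₂ : ({S₂ ∈ univ.powersetCard m₂ | Disjoint S₁ S₂} : Finset (Finset V)) =
        powersetCard m₂ S₁ᶜ := by
      ext S₂
      simp [mem_powersetCard, subset_compl_iff_disjoint_left, and_comm]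
    rw [hS₂, card_powersetCard, card_compl, mem_powersetCard_univ.mp hS₁]
  rw [disjointPairs, card_filter, sum_product]
  simp only [← card_filter]
  rw [sum_congr rfl hfiber, sum_const, card_powersetCard, card_univ, smul_eq_mul]

end DisjointPairs

theorem Nat.cast_choose_mul_choose {n m₁ m₂ : ℕ} (h : m₁ + m₂ ≤ n) :
    ((n.choose m₁ * (n - m₁).choose m₂ : ℕ) : ℝ) =
      n.factorial / ((n - m₁ - m₂).factorial * m₁.factorial * m₂.factorial) := by
  rw [eq_div_iff (by positivity)]
  norm_cast
  calc n.choose m₁ * (n - m₁).choose m₂ * ((n - m₁ - m₂).factorial * m₁.factorial * m₂.factorial)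
      = n.choose m₁ * m₁.factorial *
          ((n - m₁).choose m₂ * m₂.factorial * (n - m₁ - m₂).factorial) := by ring
    _ = n.factorial := by
      rw [Nat.choose_mul_factorial_mul_factorial (by omega),
        Nat.choose_mul_factorial_mul_factorial (by omega)]

theorem ncard_isSDF_eq_card_filter_disjointPairs {V : Type*} [Fintype V] [DecidableEq V] {c : ℝ}
    (hc0 : 0 < c) (hc1 : c < 1) (G : SimpleGraph V) [DecidableRel G.Adj] (m₁ m₂ : ℕ) :
    {f : V → ℝ | G.IsSDF c f ∧ {u | f u = 1}.ncard = m₁ ∧ {u | f u = c}.ncard = m₂}.ncard =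
      #{x ∈ disjointPairs V m₁ m₂ | ∀ u ∉ x.1 ∪ x.2, ∃ v ∈ x.1, G.Adj u v} := by
  set A := {f : V → ℝ | G.IsSDF c f ∧ {u | f u = 1}.ncard = m₁ ∧ {u | f u = c}.ncard = m₂}
  set P := {x ∈ disjointPairs V m₁ m₂ | ∀ u ∉ x.1 ∪ x.2, ∃ v ∈ x.1, G.Adj u v}
  have hdisj : ∀ x ∈ P, Disjoint x.1 x.2 := fun x hx => (mem_filter.mp (mem_filter.mp hx).1).2
  have hlevel₁ : ∀ x : Finset V × Finset V, {u | levelFun c x u = 1} = ↑x.1 := fun x =>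
    Set.ext fun _ => levelFun_eq_one_iff hc1.ne
  have hlevel₂ : ∀ x : Finset V × Finset V, Disjoint x.1 x.2 →
      {u | levelFun c x u = c} = ↑x.2 := fun x hx =>
    Set.ext fun _ => levelFun_eq_self_iff hc0.ne' hc1.ne hx
  have hmem : ∀ x : Finset V × Finset V, Disjoint x.1 x.2 → (levelFun c x ∈ A ↔ x ∈ P) := by
    intro x hx
    simp [A, P, disjointPairs, hx, hlevel₁, hlevel₂ x hx, isSDF_levelFun_iff hc0 hc1, and_comm]
  have hA : A = levelFun c '' ↑P := by
    ext f
    refine ⟨fun hf => ?_, fun ⟨x, hx, hxf⟩ => hxf ▸ (hmem x (hdisj x hx)).mpr hx⟩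
    have hf' := levelFun_filter hf.1.1
    have hx : Disjoint ({u | f u = 1} : Finset V) ({u | f u = c} : Finset V) :=
      disjoint_filter.mpr fun _ _ (h₁ : _ = _) h₂ => hc1.ne (h₂ ▸ h₁)
    exact ⟨_, (hmem _ hx).mp (by rwa [hf']), hf'⟩
  rw [hA, Set.InjOn.ncard_image, Set.ncard_coe_finset]
  intro x hx y hy hxy
  ext u
  · rw [← levelFun_eq_one_iff hc1.ne, hxy, levelFun_eq_one_iff hc1.ne]
  · rw [← levelFun_eq_self_iff hc0.ne' hc1.ne (hdisj x hx), hxy,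
      levelFun_eq_self_iff hc0.ne' hc1.ne (hdisj y hy)]

theorem stmt_9_general (t : ℕ) (ht : 2 ≤ t) (p : ℝ)
    (n : ℕ) (m₁ m₂ : ℕ) (hm : m₁ + m₂ ≤ n) :
    erExp n p (fun G =>
      ({f : Fin n → ℝ | G.IsSDF (1 / (t : ℝ)) f ∧
          {u | f u = 1}.ncard = m₁ ∧ {u | f u = 1 / (t : ℝ)}.ncard = m₂}.ncard : ℝ)) =
      (n.factorial : ℝ) /
          ((n - m₁ - m₂).factorial * m₁.factorial * m₂.factorial) *
        (1 - (1 - p) ^ m₁) ^ (n - m₁ - m₂) := by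
  classical
  have ht' : (2 : ℝ) ≤ t := by exact_mod_cast ht
  have hc0 : 0 < 1 / (t : ℝ) := by positivity
  have hc1 : 1 / (t : ℝ) < 1 := by rw [div_lt_one (by positivity)]; linarith
  simp_rw [ncard_isSDF_eq_card_filter_disjointPairs hc0 hc1, card_filter, Nat.cast_sum,
    Nat.cast_ite, Nat.cast_one, Nat.cast_zero]
  rw [erExp_sum]
  trans ∑ _x ∈ disjointPairs (Fin n) m₁ m₂, (1 - (1 - p) ^ m₁) ^ (n - m₁ - m₂)
  · refine sum_congr rfl fun x hx => ?_
    simp only [disjointPairs, mem_filter, mem_product, mem_powersetCard_univ] at hx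
    convert erExp_forall_exists_adj p (subset_union_left (s₂ := x.2)) using 1
    rw [card_union_of_disjoint hx.2, hx.1.1, hx.1.2, Nat.sub_sub]
  · rw [sum_const, card_disjointPairs, Fintype.card_fin, nsmul_eq_mul,
      Nat.cast_choose_mul_choose hm]

theorem stmt_9 (t : ℕ) (ht : 2 ≤ t) (p : ℝ) (hp : p ∈ Set.Ioo (0 : ℝ) 1)
    (n : ℕ) (hn : 1 ≤ n) (m₁ m₂ : ℕ) (hm : m₁ + m₂ ≤ n) :
    erExp n p (fun G =>
      ({f : Fin n → ℝ | G.IsSDF (1 / (t : ℝ)) f ∧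
          {u | f u = 1}.ncard = m₁ ∧ {u | f u = 1 / (t : ℝ)}.ncard = m₂}.ncard : ℝ)) =
      (n.factorial : ℝ) /
          ((n - m₁ - m₂).factorial * m₁.factorial * m₂.factorial) *
        (1 - (1 - p) ^ m₁) ^ (n - m₁ - m₂) :=
  stmt_9_general t ht p n m₁ m₂ hm
end

section
/- Let p ∈ (0,1) and let t ≥ 2 be an integer. Let n ≥ 2 be an integer such that a_p(n) ≥ 1 and t·a_p(n) ≤ n, and let m₁, m₂ be nonnegative integers with a_p(n) − 1 < m₁ + m₂/t ≤ a_p(n) (so in particular 1 ≤ m₁ + m₂ ≤ n). Then n!/((n−m₁−m₂)!·m₁!·m₂!) · (1 − (1−p)^{m₁})^{n−m₁−m₂} < exp[ (m₁+m₂)·(ln n + 2) − L(n)·ln n / (1−p)^{a_p(n)−m₁} ]. -/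
/-- `L(x) = log_{1/(1-p)} x`. -/
noncomputable def Lp (p : ℝ) (x : ℝ) : ℝ := Real.logb (1 / (1 - p)) x

/-- `a_p(n) = log_{1/(1-p)} ( n / (log_{1/(1-p)} n · ln n) )`. -/
noncomputable def apn (p : ℝ) (n : ℕ) : ℝ :=
  Real.logb (1 / (1 - p)) ((n : ℝ) / (Real.logb (1 / (1 - p)) n * Real.log n))

/-!
With `q = 1 - p`, the definition of `a = a_p(n)` says `q ^ a = L(n) ln n / n`, so the subtracted
term on the right is exactly `n q^{m₁}`. The multinomial coefficient is at most `n^{m₁+m₂}` and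
`(1 - q^{m₁})^{n-m₁-m₂} ≤ exp(-(n - m₁ - m₂) q^{m₁})`; the leftover `(m₁ + m₂) q^{m₁}` is less than
`2 (m₁ + m₂)` once `m₁ + m₂ ≥ 1`, which the lower bound on `m₁ + m₂/t` forces since `a ≥ 1`.
-/

open Real
open scoped Nat

theorem one_sub_pow_le_exp_neg_mul {x : ℝ} (hx : x ≤ 1) (N : ℕ) :
    (1 - x) ^ N ≤ exp (-(N * x)) :=
  calc (1 - x) ^ N ≤ exp (-x) ^ N := pow_le_pow_left₀ (by linarith) (one_sub_le_exp_neg x) N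
    _ = exp (-(N * x)) := by rw [← exp_nat_mul]; ring_nf

theorem factorial_div_trinomial_le_pow {n m₁ m₂ : ℕ} (h : m₁ + m₂ ≤ n) :
    (n ! : ℝ) / ((n - m₁ - m₂)! * m₁ ! * m₂ !) ≤ (n : ℝ) ^ (m₁ + m₂) := by
  rw [Nat.sub_sub]
  have hden : ((n - (m₁ + m₂))! : ℝ) ≤ (n - (m₁ + m₂))! * m₁ ! * m₂ ! := by
    rw [mul_assoc]
    exact le_mul_of_one_le_right (by positivity)
      (by exact_mod_cast Nat.one_le_iff_ne_zero.2 (Nat.mul_ne_zero m₁.factorial_ne_zero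
        m₂.factorial_ne_zero))
  have hdesc : (n ! : ℝ) / (n - (m₁ + m₂))! = n.descFactorial (m₁ + m₂) := by
    rw [div_eq_iff (by positivity), mul_comm, ← Nat.factorial_mul_descFactorial h]
    push_cast; rfl
  calc (n ! : ℝ) / ((n - (m₁ + m₂))! * m₁ ! * m₂ !) ≤ n ! / (n - (m₁ + m₂))! :=
        div_le_div_of_nonneg_left (by positivity) (by positivity) hden
    _ ≤ (n : ℝ) ^ (m₁ + m₂) := by rw [hdesc]; exact_mod_cast Nat.descFactorial_le_pow n _

theorem trinomial_mul_one_sub_pow_lt {q : ℝ} (hq0 : 0 ≤ q) (hq1 : q ≤ 1) {n m₁ m₂ : ℕ}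
    (hk : 1 ≤ m₁ + m₂) (hkn : m₁ + m₂ ≤ n) :
    (n ! : ℝ) / ((n - m₁ - m₂)! * m₁ ! * m₂ !) * (1 - q ^ m₁) ^ (n - m₁ - m₂) <
      exp ((m₁ + m₂ : ℝ) * (log n + 2) - n * q ^ m₁) := by
  have hn : (0 : ℝ) < n := by exact_mod_cast hk.trans hkn
  have hqm : q ^ m₁ ≤ 1 := pow_le_one₀ hq0 hq1
  have hk' : (1 : ℝ) ≤ m₁ + m₂ := by exact_mod_cast hk
  calc (n ! : ℝ) / ((n - m₁ - m₂)! * m₁ ! * m₂ !) * (1 - q ^ m₁) ^ (n - m₁ - m₂)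
      ≤ (n : ℝ) ^ (m₁ + m₂) * exp (-((n - m₁ - m₂ : ℕ) * q ^ m₁)) :=
        mul_le_mul (factorial_div_trinomial_le_pow hkn) (one_sub_pow_le_exp_neg_mul hqm _)
          (pow_nonneg (by linarith) _) (by positivity)
    _ = exp ((m₁ + m₂ : ℝ) * log n - (n - (m₁ + m₂)) * q ^ m₁) := by
        rw [← exp_log (pow_pos hn _), log_pow, ← exp_add, Nat.sub_sub, Nat.cast_sub hkn]
        push_cast; ring_nf
    _ < exp ((m₁ + m₂ : ℝ) * (log n + 2) - n * q ^ m₁) := by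
        have : (m₁ + m₂ : ℝ) * q ^ m₁ ≤ m₁ + m₂ := mul_le_of_le_one_right (by positivity) hqm
        exact exp_lt_exp.2 (by linarith)

theorem natCast_mul_one_sub_rpow_apn {p : ℝ} (hp : p ∈ Set.Ioo (0 : ℝ) 1) {n : ℕ}
    (hn : 2 ≤ n) : n * (1 - p) ^ apn p n = Lp p n * log n := by
  have hq0 : 0 < 1 - p := by linarith [hp.2]
  have hn' : (1 : ℝ) < n := by exact_mod_cast hn
  have hL : 0 < Lp p n := logb_pos (by rw [lt_div_iff₀ hq0]; linarith [hp.1]) hn'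
  have hlog : 0 < log n := log_pos hn'
  have hb : (1 / (1 - p)) ^ apn p n = n / (Lp p n * log n) :=
    rpow_logb (by positivity) (by rw [ne_eq, div_eq_one_iff_eq hq0.ne']; linarith [hp.1])
      (by positivity)
  rw [one_div, inv_rpow hq0.le] at hb
  rw [← inv_inv ((1 - p) ^ apn p n), hb, inv_div]
  field_simp

theorem stmt_11 (p : ℝ) (hp : p ∈ Set.Ioo (0 : ℝ) 1) (t : ℕ) (ht : 2 ≤ t)
    (n : ℕ) (hn : 2 ≤ n) (ha : 1 ≤ apn p n) (htn : (t : ℝ) * apn p n ≤ n)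
    (m₁ m₂ : ℕ) (hlow : apn p n - 1 < (m₁ : ℝ) + (m₂ : ℝ) / t)
    (hhigh : (m₁ : ℝ) + (m₂ : ℝ) / t ≤ apn p n) :
    (n.factorial : ℝ) / ((n - m₁ - m₂).factorial * m₁.factorial * m₂.factorial) *
        (1 - (1 - p) ^ m₁) ^ (n - m₁ - m₂) <
      Real.exp (((m₁ : ℝ) + m₂) * (Real.log n + 2) -
        Lp p n * Real.log n / (1 - p) ^ (apn p n - (m₁ : ℝ))) := by
  have hq0 : 0 < 1 - p := by linarith [hp.2]
  have ht1 : (1 : ℝ) ≤ t := by exact_mod_cast (by omega : 1 ≤ t)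
  have hk : 1 ≤ m₁ + m₂ := by
    by_contra! h
    obtain ⟨rfl, rfl⟩ : m₁ = 0 ∧ m₂ = 0 := by omega
    simp only [CharP.cast_eq_zero, zero_div, add_zero] at hlow
    linarith
  have hkn : m₁ + m₂ ≤ n := by
    have hsplit : (m₁ + m₂ : ℝ) ≤ t * (m₁ + m₂ / t) := by
      rw [mul_add, mul_div_cancel₀ _ (by positivity)]
      nlinarith [Nat.cast_nonneg (α := ℝ) m₁]
    exact_mod_cast (hsplit.trans (mul_le_mul_of_nonneg_left hhigh (by positivity))).trans htn
  have hterm : Lp p n * log n / (1 - p) ^ (apn p n - m₁) = n * (1 - p) ^ m₁ := by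
    have hqa : (1 - p) ^ apn p n ≠ 0 := (rpow_pos_of_pos hq0 _).ne'
    rw [rpow_sub hq0, ← natCast_mul_one_sub_rpow_apn hp hn, rpow_natCast]
    field_simp
  rw [hterm]
  exact trinomial_mul_one_sub_pow_lt hq0.le (by linarith [hp.1]) hk hkn
end

section
/- Let p ∈ (0,1) and let t ≥ 2 be an integer. Let (a_n)_{n ≥ 2} be a sequence of real numbers such that for every sufficiently large n, a_n is of the form m₁ + m₂/t for some nonnegative integers m₁, m₂ and a_p(n) − 1 < a_n ≤ a_p(n). Then the quantity E_n := Σ n!/((n−m₁−m₂)!·m₁!·m₂!) · (1 − (1−p)^{m₁})^{n−m₁−m₂}, where the sum ranges over all pairs (m₁, m₂) of nonnegative integers with m₁ + m₂/t = a_n and m₁ + m₂ ≤ n, tends to 0 as n → ∞. -/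
open Filter

/-!
Write `L = L(n)`, `x = ln n` and `M = m₁ + m₂`. Each summand is at most
`n ^ M · exp (-(1-p)^m₁ (n - M))`. The choice of `a_p(n)` makes `(1-p)^(a_p(n)) = L x / n`, so
`m₁ + m₂/t ≤ a_p(n)` gives `(1-p)^m₁ ≥ (L x / n) (1-p)^(-m₂/t) ≥ (L x / n)(1 + m₂ ln(1/(1-p)) / t)`.
As `L · ln(1/(1-p)) = x` and `M = O(log n)`, this makes `(1-p)^m₁ (n - M) ≥ (L - 1/2) x + m₂ x`
for large `n`. Since `a_p(n) = L - log_{1/(1-p)} (L x)`, eventually `m₁ ≤ L - 4`, so each summand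
is at most `n⁻³`, and there are at most `(n+1)²` of them.
-/

open Real Topology
open scoped Nat

theorem factorial_div_factorial_mul_le_pow {n u v : ℕ} (h : u + v ≤ n) :
    (n ! : ℝ) / ((n - u - v)! * u ! * v !) ≤ (n : ℝ) ^ (u + v) := by
  have hnat : n ! ≤ (n - u - v)! * u ! * v ! * n ^ (u + v) :=
    calc n ! = (n - u - v)! * n.descFactorial (u + v) := by
          rw [Nat.sub_sub, Nat.factorial_mul_descFactorial h]
      _ ≤ (n - u - v)! * 1 * 1 * n ^ (u + v) := by
          rw [mul_one, mul_one]; gcongr; exact Nat.descFactorial_le_pow n _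
      _ ≤ (n - u - v)! * u ! * v ! * n ^ (u + v) := by
          gcongr <;> exact Nat.factorial_pos _
  rw [div_le_iff₀ (by positivity)]
  exact_mod_cast hnat.trans_eq (by ring)

theorem factorial_div_mul_one_sub_pow_le_exp {n u v : ℕ} {q : ℝ} (hq0 : 0 ≤ q) (hq1 : q ≤ 1)
    (hn : 0 < n) (h : u + v ≤ n) :
    (n ! : ℝ) / ((n - u - v)! * u ! * v !) * (1 - q ^ u) ^ (n - u - v) ≤
      exp ((u + v) * log n - q ^ u * (n - (u + v))) := by
  have hsub : ((n - u - v : ℕ) : ℝ) = n - (u + v) := by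
    rw [Nat.sub_sub, Nat.cast_sub h]; push_cast; ring
  have hqu : 0 ≤ 1 - q ^ u := sub_nonneg.2 (pow_le_one₀ hq0 hq1)
  have hpow : (1 - q ^ u) ^ (n - u - v) ≤ exp (-(q ^ u * (n - (u + v)))) :=
    calc (1 - q ^ u) ^ (n - u - v) ≤ exp (-q ^ u) ^ (n - u - v) := by
          gcongr; exact one_sub_le_exp_neg _
      _ = exp (-(q ^ u * (n - (u + v)))) := by
          rw [← exp_nat_mul, hsub]; ring_nf
  have hnpow : (n : ℝ) ^ (u + v) = exp ((u + v) * log n) := by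
    rw [← Nat.cast_add, exp_nat_mul, exp_log (by exact_mod_cast hn)]
  calc _ ≤ (n : ℝ) ^ (u + v) * exp (-(q ^ u * (n - (u + v)))) := by
        gcongr
        exact factorial_div_factorial_mul_le_pow h
    _ = _ := by rw [hnpow, ← exp_add]; ring_nf

section

variable {p : ℝ}

theorem one_lt_one_div_one_sub (hp : p ∈ Set.Ioo (0 : ℝ) 1) : 1 < 1 / (1 - p) := by
  rw [lt_div_iff₀ (by linarith [hp.2])]; linarith [hp.1]

theorem Lp_pos (hp : p ∈ Set.Ioo (0 : ℝ) 1) {x : ℝ} (hx : 1 < x) : 0 < Lp p x :=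
  logb_pos (one_lt_one_div_one_sub hp) hx

theorem Lp_mul_log_base (hp : p ∈ Set.Ioo (0 : ℝ) 1) (x : ℝ) :
    Lp p x * log (1 / (1 - p)) = log x :=
  div_mul_cancel₀ _ (log_pos (one_lt_one_div_one_sub hp)).ne'

theorem apn_eq_Lp_sub (hp : p ∈ Set.Ioo (0 : ℝ) 1) {n : ℕ} (hn : 2 ≤ n) :
    apn p n = Lp p n - Lp p (Lp p n * log n) := by
  have hn1 : (1 : ℝ) < n := by exact_mod_cast hn
  have hpos : 0 < Lp p n * log n := mul_pos (Lp_pos hp hn1) (log_pos hn1)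
  exact logb_div (by positivity) hpos.ne'

theorem one_sub_rpow_apn (hp : p ∈ Set.Ioo (0 : ℝ) 1) {n : ℕ} (hn : 2 ≤ n) :
    (1 - p) ^ apn p n = Lp p n * log n / n := by
  have hn1 : (1 : ℝ) < n := by exact_mod_cast hn
  have hpos : 0 < Lp p n * log n := mul_pos (Lp_pos hp hn1) (log_pos hn1)
  have hb := one_lt_one_div_one_sub hp
  rw [show 1 - p = (1 / (1 - p))⁻¹ by simp, inv_rpow (by positivity), apn,
    rpow_logb (by positivity) hb.ne' (by positivity)]
  exact inv_div _ _

theorem le_one_sub_pow_of_add_div_le_apn (hp : p ∈ Set.Ioo (0 : ℝ) 1) {n : ℕ} (hn : 2 ≤ n)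
    {t : ℝ} (ht : 0 < t) {u v : ℕ} (h : u + v / t ≤ apn p n) :
    Lp p n * log n / n * (1 + log (1 / (1 - p)) * v / t) ≤ (1 - p) ^ u := by
  have hq0 : 0 < 1 - p := by linarith [hp.2]
  have hsplit : (1 - p) ^ u = (1 - p) ^ ((u : ℝ) + v / t) * exp (log (1 / (1 - p)) * v / t) := by
    rw [← rpow_natCast, rpow_def_of_pos hq0, rpow_def_of_pos hq0, ← exp_add, one_div, log_inv]
    ring_nf
  rw [hsplit, ← one_sub_rpow_apn hp hn]
  have hc : 0 ≤ log (1 / (1 - p)) := (log_pos (one_lt_one_div_one_sub hp)).le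
  apply mul_le_mul _ _ (by positivity) (by positivity)
  · exact rpow_le_rpow_of_exponent_ge hq0 (by linarith [hp.1]) h
  · linarith [add_one_le_exp (log (1 / (1 - p)) * v / t)]

structure LargeRegime (p t : ℝ) (n : ℕ) : Prop where
  two_le : 2 ≤ n
  two_mul_le_log : 2 * t ≤ log n
  one_le_Lp : 1 ≤ Lp p n
  four_le_Lp_Lp_mul_log : 4 ≤ Lp p (Lp p n * log n)
  mul_Lp_sq_le : 2 * (t + 1) * Lp p n ^ 2 ≤ n

theorem eventually_largeRegime (hp : p ∈ Set.Ioo (0 : ℝ) 1) {t : ℝ} (ht : 0 < t) :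
    ∀ᶠ n : ℕ in atTop, LargeRegime p t n := by
  have hb := one_lt_one_div_one_sub hp
  have hnat : Tendsto (fun n : ℕ => (n : ℝ)) atTop atTop := tendsto_natCast_atTop_atTop
  have hlog : Tendsto (fun n : ℕ => log n) atTop atTop := tendsto_log_atTop.comp hnat
  have hL : Tendsto (fun n : ℕ => Lp p n) atTop atTop := (tendsto_logb_atTop hb).comp hnat
  have hgap : Tendsto (fun n : ℕ => Lp p (Lp p n * log n)) atTop atTop :=
    (tendsto_logb_atTop hb).comp (hL.atTop_mul_atTop₀ hlog)
  have hsq : Tendsto (fun n : ℕ => Lp p n ^ 2 / n) atTop (𝓝 0) := by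
    simpa [Lp, Function.comp_def] using
      (tendsto_pow_logb_div_mul_add_atTop 1 0 2 one_ne_zero).comp hnat
  filter_upwards [eventually_ge_atTop 2, hlog.eventually_ge_atTop (2 * t),
    hL.eventually_ge_atTop 1, hgap.eventually_ge_atTop 4,
    hsq.eventually_le_const (show (0 : ℝ) < 1 / (2 * (t + 1)) by positivity)]
    with n hn hlogn hLn hgapn hsqn
  refine ⟨hn, hlogn, hLn, hgapn, ?_⟩
  have hn0 : (0 : ℝ) < n := by positivity
  rw [div_le_div_iff₀ hn0 (by positivity)] at hsqn
  linarith

theorem LargeRegime.add_mul_log_sub_one_sub_pow_mul_le (hp : p ∈ Set.Ioo (0 : ℝ) 1)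
    {t : ℝ} (ht : 0 < t) {n : ℕ} (hreg : LargeRegime p t n)
    {u v : ℕ} (h : u + v / t ≤ apn p n) (huv : u + v ≤ n) :
    (u + v) * log n - (1 - p) ^ u * (n - (u + v)) ≤ -(3 * log n) := by
  obtain ⟨hn, hlog, hL, hgap, hsq⟩ := hreg
  have hq := le_one_sub_pow_of_add_div_le_apn hp hn ht h
  rw [apn_eq_Lp_sub hp hn] at h
  have hLc := Lp_mul_log_base hp n
  set x := log n
  set L := Lp p n
  set c := log (1 / (1 - p))
  have hn0 : (0 : ℝ) < n := by positivity
  have hx : 0 ≤ x := by linarith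
  have hvt : 0 ≤ (v : ℝ) / t := by positivity
  have hu : (u : ℝ) + 4 ≤ L := by linarith
  have hv : (v : ℝ) ≤ L * t := (div_le_iff₀ ht).1 (by linarith)
  have hM : (u : ℝ) + v ≤ (t + 1) * L := by linarith
  have hMn : ((u : ℝ) + v) / n ≤ 1 / 2 := by
    rw [div_le_iff₀ hn0]; nlinarith
  have hLMn : L * (u + v) / n ≤ 1 / 2 := by
    rw [div_le_iff₀ hn0]; nlinarith
  set r : ℝ := 1 - (u + v) / n with hr
  have hLr : L - 1 / 2 ≤ L * r := by
    rw [hr, mul_sub, mul_one, ← mul_div_assoc]; linarith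
  have htr : t ≤ x * r := by nlinarith
  have hsplit :
      L * x / n * (1 + c * v / t) * (n - (u + v)) = x * (L * r) + x * v * (x * r) / t := by
    rw [hr]; field_simp; linear_combination (x * v * (n - u - v)) * hLc
  have hnM : (0 : ℝ) ≤ n - (u + v) := by
    rw [sub_nonneg]; exact_mod_cast huv
  have hxv : x * v ≤ x * v * (x * r) / t := by
    rw [le_div_iff₀ ht]; exact mul_le_mul_of_nonneg_left htr (by positivity)
  have hlower : x * (L - 1 / 2) + x * v ≤ (1 - p) ^ u * (n - (u + v)) :=
    calc x * (L - 1 / 2) + x * v ≤ x * (L * r) + x * v * (x * r) / t := by gcongr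
      _ = L * x / n * (1 + c * v / t) * (n - (u + v)) := hsplit.symm
      _ ≤ (1 - p) ^ u * (n - (u + v)) := mul_le_mul_of_nonneg_right hq hnM
  nlinarith [mul_le_mul_of_nonneg_left hu hx]

theorem LargeRegime.factorial_div_mul_one_sub_pow_le (hp : p ∈ Set.Ioo (0 : ℝ) 1)
    {t : ℝ} (ht : 0 < t) {n : ℕ} (hreg : LargeRegime p t n)
    {u v : ℕ} (h : u + v / t ≤ apn p n) (huv : u + v ≤ n) :
    (n ! : ℝ) / ((n - u - v)! * u ! * v !) * (1 - (1 - p) ^ u) ^ (n - u - v) ≤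
      ((n : ℝ) ^ 3)⁻¹ := by
  have hn0 : (0 : ℝ) < n := by have := hreg.two_le; positivity
  calc _ ≤ exp ((u + v) * log n - (1 - p) ^ u * (n - (u + v))) :=
        factorial_div_mul_one_sub_pow_le_exp (by linarith [hp.2]) (by linarith [hp.1])
          (by exact_mod_cast hn0) huv
    _ ≤ exp (-(3 * log n)) := exp_le_exp.2 (hreg.add_mul_log_sub_one_sub_pow_mul_le hp ht h huv)
    _ = ((n : ℝ) ^ 3)⁻¹ := by
        rw [exp_neg, show (3 : ℝ) = (3 : ℕ) by norm_num, ← log_pow, exp_log (by positivity)]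

end

open scoped Classical in
theorem stmt_13 (p : ℝ) (hp : p ∈ Set.Ioo (0 : ℝ) 1) (t : ℕ) (ht : 2 ≤ t)
    (a : ℕ → ℝ)
    (ha : ∀ᶠ n : ℕ in atTop,
      (∃ m₁ m₂ : ℕ, a n = (m₁ : ℝ) + (m₂ : ℝ) / t) ∧
      apn p n - 1 < a n ∧ a n ≤ apn p n) :
    Filter.Tendsto (fun n : ℕ =>
      ∑ q ∈ (Finset.range (n + 1) ×ˢ Finset.range (n + 1)).filter
          (fun q => (q.1 : ℝ) + (q.2 : ℝ) / t = a n ∧ q.1 + q.2 ≤ n),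
        (n.factorial : ℝ) /
            ((n - q.1 - q.2).factorial * q.1.factorial * q.2.factorial) *
          (1 - (1 - p) ^ q.1) ^ (n - q.1 - q.2))
      Filter.atTop (nhds 0) := by
  have ht0 : (0 : ℝ) < t := Nat.cast_pos.2 (by omega)
  refine squeeze_zero' (Eventually.of_forall fun n => Finset.sum_nonneg fun q _ => ?_) ?_
    (tendsto_const_div_atTop_nhds_zero_nat 4)
  · have : (1 - p) ^ q.1 ≤ 1 := pow_le_one₀ (by linarith [hp.2]) (by linarith [hp.1])
    have : 0 ≤ 1 - (1 - p) ^ q.1 := by linarith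
    positivity
  filter_upwards [ha, eventually_largeRegime hp ht0] with n hA hreg
  obtain ⟨-, -, hupp⟩ := hA
  have hn := hreg.two_le
  have hn0 : (0 : ℝ) < n := by positivity
  refine (Finset.sum_le_card_nsmul _ _ ((n : ℝ) ^ 3)⁻¹ fun q hq => ?_).trans ?_
  · obtain ⟨-, hq, huv⟩ := Finset.mem_filter.1 hq
    exact hreg.factorial_div_mul_one_sub_pow_le hp ht0 (hq.le.trans hupp) huv
  have hsucc : ((n : ℝ) + 1) ^ 2 ≤ (2 * n) ^ 2 := by
    gcongr; linarith [show (2 : ℝ) ≤ n by exact_mod_cast hn]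
  rw [nsmul_eq_mul]
  refine (mul_le_mul_of_nonneg_right (?_ : _ ≤ ((n : ℝ) + 1) ^ 2) (by positivity)).trans ?_
  · exact_mod_cast (Finset.card_filter_le _ _).trans_eq (by simp [sq])
  rw [← div_eq_mul_inv, div_le_div_iff₀ (by positivity) hn0]
  nlinarith [mul_le_mul_of_nonneg_right hsucc hn0.le]
end
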